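/- arXiv:1106.1257 — 3 statements merged into one kernel-verified Lean document; each statement's English description precedes it below -/
import Mathlib

section
/- For every real number d with 0 ≤ d ≤ 1, the measure V(R, R + a + b, d) of the set of pairs of points (p, q) with p ∈ R, q ∈ R + a + b and ‖p − q‖ ≤ d equals (3/4)·[(1/6 − π/(18√3))·d⁴]. -/
open MeasureTheory Real

noncomputable section

/-- The vector a = (1, 0) in the Euclidean plane. -/
def va : EuclideanSpace ℝ (Fin 2) := !₂[1, 0]

/-- The vector b = (1/2, √3/2) in the Euclidean plane. -/
def vb : EuclideanSpace ℝ (Fin 2) := !₂[1/2, Real.sqrt 3 / 2]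

/-- The unit rhombus R = {s•a + t•b : s, t ∈ [0,1]}, with unit side and acute angle π/3. -/
def Rhombus : Set (EuclideanSpace ℝ (Fin 2)) :=
  {p | ∃ s t : ℝ, s ∈ Set.Icc (0:ℝ) 1 ∧ t ∈ Set.Icc (0:ℝ) 1 ∧ p = s • va + t • vb}

/-- V(A, B, d): Lebesgue measure of the set of pairs (p, q), p ∈ A, q ∈ B, ‖p − q‖ ≤ d. -/
def V (A B : Set (EuclideanSpace ℝ (Fin 2))) (d : ℝ) : ℝ :=
  (volume {pq : EuclideanSpace ℝ (Fin 2) × EuclideanSpace ℝ (Fin 2) |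
    pq.1 ∈ A ∧ pq.2 ∈ B ∧ ‖pq.1 - pq.2‖ ≤ d}).toReal

/-- The long-diagonal neighbor of the rhombus: R + a + b. -/
def RhombusLD : Set (EuclideanSpace ℝ (Fin 2)) := (fun p => p + va + vb) '' Rhombus

end

/-!
Write `p = s • a + t • b ∈ R` and `q = s' • a + t' • b + a + b ∈ R + a + b`. Then
`q - p = α • a + β • b` with `α = 1 - s + s'`, `β = 1 - t + t'`, and `‖q - p‖² = α² + αβ + β²`.
The linear change of variables `(s, t, s', t') ↦ (p, q)` has Jacobian `(√3 / 2)² = 3 / 4`.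
Each of `α`, `β` is `1` plus the difference of two independent uniform variables on `[0, 1]`,
whose density is `u` on `[0, 1]`; as `d ≤ 1`, only that range matters, so the parameter volume is
`∫∫ α β` over `{α, β ≥ 0, α² + αβ + β² ≤ d²}`. For fixed `α` the `β`-range is
`[0, (√(4d² - 3α²) - α) / 2]`, and the remaining one-variable integral has an elementary
antiderivative whose arcsine term produces `π / (18 √3)`.
-/

open Set
open scoped ENNReal

local notation "E" => EuclideanSpace ℝ (Fin 2)

/-- The closed `d`-ball of the norm `‖α • a + β • b‖`, see `norm_smul_va_add_smul_vb_le_iff`. -/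
def obliqueBall (d : ℝ) : Set (ℝ × ℝ) := {p | p.1 ^ 2 + p.1 * p.2 + p.2 ^ 2 ≤ d ^ 2}

lemma measurableSet_obliqueBall (d : ℝ) : MeasurableSet (obliqueBall d) :=
  measurableSet_le (by fun_prop) (by fun_prop)

noncomputable def chord (d α : ℝ) : ℝ := (√(4 * d ^ 2 - 3 * α ^ 2) - α) / 2

@[fun_prop]
lemma continuous_chord (d : ℝ) : Continuous (chord d) := by
  unfold chord
  fun_prop

lemma mem_obliqueBall_iff_le_chord {d α β : ℝ} (hα : 0 ≤ α) (hβ : 0 ≤ β) :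
    (α, β) ∈ obliqueBall d ↔ β ≤ chord d α := by
  rw [obliqueBall, mem_ofPred_eq, chord, le_div_iff₀ two_pos, le_sub_iff_add_le]
  rcases (show 0 ≤ β * 2 + α by positivity).eq_or_lt with h0 | hpos
  · obtain ⟨rfl, rfl⟩ : α = 0 ∧ β = 0 := ⟨by linarith, by linarith⟩
    simp [sq_nonneg]
  · rw [Real.le_sqrt' hpos]
    constructor <;> intro h <;> nlinarith

lemma chord_nonneg_iff {d α : ℝ} (hd : 0 ≤ d) (hα : 0 ≤ α) : 0 ≤ chord d α ↔ α ≤ d := by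
  rw [← mem_obliqueBall_iff_le_chord hα le_rfl, obliqueBall, mem_ofPred_eq, mul_zero, add_zero,
    zero_pow two_ne_zero, add_zero]
  exact pow_le_pow_iff_left₀ hα hd two_ne_zero

noncomputable def chordAntideriv (d x : ℝ) : ℝ :=
  d ^ 2 * x ^ 2 / 4 - x ^ 4 / 16 - √3 * d ^ 4 / 18 * arcsin (√3 * x / (2 * d))
    - x * (2 * x ^ 2 - 4 * d ^ 2 / 3) / 32 * √(4 * d ^ 2 - 3 * x ^ 2)

lemma hasDerivAt_chordAntideriv {d x : ℝ} (hd : 0 < d) (hx : 3 * x ^ 2 < 4 * d ^ 2) :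
    HasDerivAt (chordAntideriv d) (x * (chord d x ^ 2 / 2)) x := by
  have h3 : √3 ^ 2 = 3 := Real.sq_sqrt zero_le_three
  have hpos : 0 < 4 * d ^ 2 - 3 * x ^ 2 := by linarith
  have hu : (√3 * x / (2 * d)) ^ 2 < 1 := by
    rw [div_pow, div_lt_one (by positivity)]
    nlinarith
  have harc := (Real.hasDerivAt_arcsin (x := √3 * x / (2 * d)) (by nlinarith) (by nlinarith)).comp
    x (((hasDerivAt_id x).const_mul √3).div_const (2 * d))
  have hsqrt := (((hasDerivAt_pow 2 x).const_mul 3).const_sub (4 * d ^ 2)).sqrt hpos.ne'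
  have h := (((hasDerivAt_pow 2 x).const_mul (d ^ 2)).div_const 4 |>.sub
    ((hasDerivAt_pow 4 x).div_const 16)).sub (harc.const_mul (√3 * d ^ 4 / 18)) |>.sub
    ((((hasDerivAt_id x).mul (((hasDerivAt_pow 2 x).const_mul 2).sub_const
      (4 * d ^ 2 / 3))).div_const 32).mul hsqrt)
  refine h.congr_deriv ?_
  have hw : √(1 - (√3 * x / (2 * d)) ^ 2) = √(4 * d ^ 2 - 3 * x ^ 2) / (2 * d) := by
    rw [show 1 - (√3 * x / (2 * d)) ^ 2 = (4 * d ^ 2 - 3 * x ^ 2) / (2 * d) ^ 2 by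
      field_simp; linear_combination -x ^ 2 * h3, Real.sqrt_div hpos.le,
      Real.sqrt_sq (by positivity)]
  have hs := Real.sq_sqrt hpos.le
  have hs0 := Real.sqrt_pos.2 hpos
  simp only [id, Pi.mul_apply, chord, hw]
  set s := √(4 * d ^ 2 - 3 * x ^ 2)
  field_simp
  linear_combination (55296 * x ^ 2 + 36864 * d ^ 2 - 110592 * x * s) * hs - 49152 * d ^ 4 * h3

lemma chordAntideriv_zero (d : ℝ) : chordAntideriv d 0 = 0 := by
  simp [chordAntideriv]

lemma chordAntideriv_self {d : ℝ} (hd : 0 < d) :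
    chordAntideriv d d = (1 / 6 - π / (18 * √3)) * d ^ 4 := by
  have h3 : √3 ^ 2 = 3 := Real.sq_sqrt zero_le_three
  have h3p : 0 < √3 := by positivity
  have harcsin : arcsin (√3 * d / (2 * d)) = π / 3 := by
    rw [mul_div_mul_right _ _ hd.ne', ← Real.sin_pi_div_three]
    exact Real.arcsin_sin (by linarith [Real.pi_pos]) (by linarith [Real.pi_pos])
  rw [chordAntideriv, harcsin, show 4 * d ^ 2 - 3 * d ^ 2 = d ^ 2 by ring, Real.sqrt_sq hd.le]
  field_simp
  linear_combination -12288 * π * h3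

lemma integral_mul_chord_sq {d : ℝ} (hd : 0 ≤ d) :
    ∫ α in (0 : ℝ)..d, α * (chord d α ^ 2 / 2) = (1 / 6 - π / (18 * √3)) * d ^ 4 := by
  rcases hd.eq_or_lt with rfl | hd
  · simp
  rw [intervalIntegral.integral_eq_sub_of_hasDerivAt (fun α hα => hasDerivAt_chordAntideriv hd ?_)
    ((by fun_prop : Continuous fun α => α * (chord d α ^ 2 / 2)).intervalIntegrable 0 d),
    chordAntideriv_self hd, chordAntideriv_zero, sub_zero]
  rw [uIcc_of_le hd.le] at hα
  nlinarith [hα.1, hα.2]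

lemma lintegral_unitSquare_one_sub_add {h : ℝ → ℝ≥0∞} (hm : Measurable h)
    (h0 : ∀ u, 1 < u → h u = 0) :
    ∫⁻ z in Icc (0 : ℝ) 1 ×ˢ Icc (0 : ℝ) 1, h (1 - z.1 + z.2) = ∫⁻ u, ENNReal.ofReal u * h u := by
  let ψ : ℝ × ℝ → ℝ × ℝ := fun w => (w.1, w.1 + w.2) + (0, -1)
  have hψ : MeasurePreserving ψ volume volume := by
    rw [Measure.volume_eq_prod]
    exact (measurePreserving_add_right _ _).comp (measurePreserving_prod_add _ _)
  have hsq : MeasurableSet (Icc (0 : ℝ) 1 ×ˢ Icc (0 : ℝ) 1) :=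
    measurableSet_Icc.prod measurableSet_Icc
  have hT : MeasurableSet (ψ ⁻¹' (Icc 0 1 ×ˢ Icc 0 1)) := hψ.measurable hsq
  calc ∫⁻ z in Icc (0 : ℝ) 1 ×ˢ Icc (0 : ℝ) 1, h (1 - z.1 + z.2)
      = ∫⁻ w in ψ ⁻¹' (Icc 0 1 ×ˢ Icc 0 1), h w.2 := by
        rw [← hψ.setLIntegral_comp_preimage hsq (f := fun z => h (1 - z.1 + z.2))
          (hm.comp (by fun_prop))]
        congr! with w
        simp only [ψ, Prod.fst_add, Prod.snd_add]
        ring_nf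
    _ = ∫⁻ u, ∫⁻ x, (ψ ⁻¹' (Icc 0 1 ×ˢ Icc 0 1)).indicator (fun w => h w.2) (x, u) := by
        rw [← lintegral_indicator hT, Measure.volume_eq_prod]
        exact lintegral_prod_symm' _ ((hm.comp measurable_snd).indicator hT)
    _ = ∫⁻ u, ENNReal.ofReal u * h u := by
        refine lintegral_congr fun u => ?_
        calc ∫⁻ x, (ψ ⁻¹' (Icc 0 1 ×ˢ Icc 0 1)).indicator (fun w => h w.2) (x, u)
            = ∫⁻ x, (Icc (max 0 (1 - u)) (min 1 (2 - u))).indicator (fun _ => h u) x := by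
              congr! 2 with x
              simp only [indicator, ψ, mem_preimage, Prod.mk_add_mk, mem_prod, mem_Icc,
                max_le_iff, le_min_iff]
              congr! 1
              constructor <;> intro hx <;> refine ⟨⟨?_, ?_⟩, ?_, ?_⟩ <;> linarith
          _ = h u * ENNReal.ofReal (min 1 (2 - u) - max 0 (1 - u)) := by
              rw [lintegral_indicator_const measurableSet_Icc, Real.volume_Icc]
          _ = ENNReal.ofReal u * h u := by
              rcases le_or_gt u 1 with hu | hu
              · rw [min_eq_left (by linarith), max_eq_right (by linarith), sub_sub_cancel,
                  mul_comm]
              · simp [h0 u hu]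

lemma setLIntegral_Icc_ofReal {c : ℝ} (hc : 0 ≤ c) :
    ∫⁻ β in Icc 0 c, ENNReal.ofReal β = ENNReal.ofReal (c ^ 2 / 2) := by
  have hint : IntegrableOn (fun β : ℝ => β) (Icc 0 c) := continuous_id.integrableOn_Icc
  rw [← ofReal_integral_eq_lintegral_ofReal hint
    ((ae_restrict_iff' measurableSet_Icc).2 (.of_forall fun β hβ => hβ.1)),
    integral_Icc_eq_integral_Ioc, ← intervalIntegral.integral_of_le hc, integral_id]
  norm_num

lemma lintegral_ofReal_mul_indicator_obliqueBall {d α : ℝ} (hd : 0 ≤ d) (hα : 0 ≤ α) :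
    ∫⁻ β, ENNReal.ofReal β * (obliqueBall d).indicator 1 (α, β) =
      (Icc 0 d).indicator (fun α => ENNReal.ofReal (chord d α ^ 2 / 2)) α := by
  have hslice : ∀ β, ENNReal.ofReal β * (obliqueBall d).indicator 1 (α, β) =
      (Icc 0 (chord d α)).indicator ENNReal.ofReal β := by
    intro β
    rcases lt_or_ge β 0 with hβ | hβ
    · simp [ENNReal.ofReal_of_nonpos hβ.le, hβ.not_ge]
    · by_cases hmem : (α, β) ∈ obliqueBall d
      · rw [indicator_of_mem hmem, indicator_of_mem (show β ∈ Icc 0 (chord d α) from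
          ⟨hβ, (mem_obliqueBall_iff_le_chord hα hβ).1 hmem⟩), Pi.one_apply, mul_one]
      · rw [indicator_of_notMem hmem, indicator_of_notMem fun h =>
          hmem ((mem_obliqueBall_iff_le_chord hα hβ).2 h.2), mul_zero]
  simp only [hslice, lintegral_indicator measurableSet_Icc]
  by_cases hαd : α ≤ d
  · rw [indicator_of_mem (show α ∈ Icc 0 d from ⟨hα, hαd⟩),
      setLIntegral_Icc_ofReal ((chord_nonneg_iff hd hα).2 hαd)]
  · rw [indicator_of_notMem fun h => hαd h.2,
      Icc_eq_empty fun h => hαd ((chord_nonneg_iff hd hα).1 h), Measure.restrict_empty,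
      lintegral_zero_measure]

/-- `((s, s'), (t, t'))` stands for `p = s • a + t • b` and `q = s' • a + t' • b + a + b`,
so that `q - p = (1 - s + s') • a + (1 - t + t') • b`. -/
def shiftedPairs (d : ℝ) : Set ((ℝ × ℝ) × (ℝ × ℝ)) :=
  (Icc 0 1 ×ˢ Icc 0 1) ×ˢ (Icc 0 1 ×ˢ Icc 0 1) ∩
    (fun w => (1 - w.1.1 + w.1.2, 1 - w.2.1 + w.2.2)) ⁻¹' obliqueBall d

lemma measurableSet_shiftedPairs (d : ℝ) : MeasurableSet (shiftedPairs d) :=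
  ((measurableSet_Icc.prod measurableSet_Icc).prod (measurableSet_Icc.prod measurableSet_Icc)).inter
    ((measurableSet_obliqueBall d).preimage (by fun_prop))

lemma volume_shiftedPairs_eq_lintegral {d : ℝ} (hd : 0 ≤ d) (hd1 : d ≤ 1) :
    volume (shiftedPairs d) =
      ∫⁻ α, ENNReal.ofReal α * ∫⁻ β, ENNReal.ofReal β * (obliqueBall d).indicator 1 (α, β) := by
  have hsq : MeasurableSet (Icc (0 : ℝ) 1 ×ˢ Icc (0 : ℝ) 1) :=
    measurableSet_Icc.prod measurableSet_Icc
  have hind : Measurable ((obliqueBall d).indicator (1 : ℝ × ℝ → ℝ≥0∞)) :=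
    measurable_one.indicator (measurableSet_obliqueBall d)
  have hpre := (measurableSet_obliqueBall d).preimage
    (f := fun w : (ℝ × ℝ) × (ℝ × ℝ) => (1 - w.1.1 + w.1.2, 1 - w.2.1 + w.2.2)) (by fun_prop)
  calc volume (shiftedPairs d)
      = ∫⁻ u in Icc 0 1 ×ˢ Icc 0 1, ∫⁻ v in Icc 0 1 ×ˢ Icc 0 1,
          (obliqueBall d).indicator 1 (1 - u.1 + u.2, 1 - v.1 + v.2) := by
        rw [shiftedPairs, inter_comm, ← Measure.restrict_apply' (hsq.prod hsq),
          ← lintegral_indicator_one hpre, Measure.volume_eq_prod,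
          setLIntegral_prod _ (measurable_one.indicator hpre).aemeasurable]
        rfl
    _ = ∫⁻ u in Icc 0 1 ×ˢ Icc 0 1,
          ∫⁻ β, ENNReal.ofReal β * (obliqueBall d).indicator 1 (1 - u.1 + u.2, β) := by
        refine setLIntegral_congr_fun hsq fun u hu => ?_
        have hα : 0 ≤ 1 - u.1 + u.2 := by linarith [hu.1.2, hu.2.1]
        refine lintegral_unitSquare_one_sub_add (hind.comp measurable_prodMk_left) fun β hβ => ?_
        refine indicator_of_notMem (fun h => ?_) _
        have h' : _ ≤ d ^ 2 := h
        nlinarith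
    _ = _ := by
        refine lintegral_unitSquare_one_sub_add
          ((ENNReal.measurable_ofReal.comp measurable_snd).mul hind).lintegral_prod_right'
          fun α hα => ?_
        exact (lintegral_ofReal_mul_indicator_obliqueBall hd (by linarith)).trans
          (indicator_of_notMem (fun h => by linarith [h.2]) _)

lemma volume_shiftedPairs {d : ℝ} (hd : 0 ≤ d) (hd1 : d ≤ 1) :
    volume (shiftedPairs d) = ENNReal.ofReal (∫ α in (0 : ℝ)..d, α * (chord d α ^ 2 / 2)) := by
  calc volume (shiftedPairs d)
      = ∫⁻ α in Icc 0 d, ENNReal.ofReal (α * (chord d α ^ 2 / 2)) := by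
        rw [volume_shiftedPairs_eq_lintegral hd hd1, ← lintegral_indicator measurableSet_Icc]
        refine lintegral_congr fun α => ?_
        rcases lt_or_ge α 0 with hα | hα
        · simp [ENNReal.ofReal_of_nonpos hα.le, hα.not_ge]
        · rw [lintegral_ofReal_mul_indicator_obliqueBall hd hα, ← indicator_mul_right]
          exact congrFun (indicator_congr fun j hj => (ENNReal.ofReal_mul hj.1).symm) α
    _ = ENNReal.ofReal (∫ α in (0 : ℝ)..d, α * (chord d α ^ 2 / 2)) := by
        rw [← ofReal_integral_eq_lintegral_ofReal (by fun_prop : Continuous _).integrableOn_Icc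
          ((ae_restrict_iff' measurableSet_Icc).2 (.of_forall fun α hα => by
            have := hα.1; positivity)),
          integral_Icc_eq_integral_Ioc, ← intervalIntegral.integral_of_le hd]

lemma norm_smul_va_add_smul_vb (α β : ℝ) : ‖α • va + β • vb‖ = √(α ^ 2 + α * β + β ^ 2) := by
  rw [EuclideanSpace.norm_eq, Fin.sum_univ_two]
  congr 1
  simp only [va, vb, PiLp.add_apply, PiLp.smul_apply, Matrix.cons_val_zero, Matrix.cons_val_one,
    Matrix.cons_val_fin_one, smul_eq_mul, norm_eq_abs, sq_abs]
  linear_combination β ^ 2 / 4 * Real.sq_sqrt zero_le_three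

lemma norm_smul_va_add_smul_vb_le_iff {d : ℝ} (hd : 0 ≤ d) (α β : ℝ) :
    ‖α • va + β • vb‖ ≤ d ↔ (α, β) ∈ obliqueBall d := by
  rw [norm_smul_va_add_smul_vb, Real.sqrt_le_left hd]
  rfl

noncomputable def obliqueMap : E →ₗ[ℝ] E where
  toFun x := x 0 • va + x 1 • vb
  map_add' x y := by simp only [PiLp.add_apply]; module
  map_smul' c x := by simp only [PiLp.smul_apply, smul_eq_mul, RingHom.id_apply]; module

lemma obliqueMap_apply (x : E) : obliqueMap x = x 0 • va + x 1 • vb := rfl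

lemma det_obliqueMap : LinearMap.det obliqueMap = √3 / 2 := by
  let b := (EuclideanSpace.basisFun (Fin 2) ℝ).toBasis
  rw [← LinearMap.det_toMatrix b]
  have : LinearMap.toMatrix b b obliqueMap = !![1, 1 / 2; 0, √3 / 2] := by
    ext i j
    fin_cases i <;> fin_cases j <;> simp [b, LinearMap.toMatrix_apply, obliqueMap_apply, va, vb]
  rw [this, Matrix.det_fin_two_of]
  ring

lemma det_prodMap_obliqueMap : LinearMap.det (obliqueMap.prodMap obliqueMap) = 3 / 4 := by
  rw [LinearMap.det_prodMap, det_obliqueMap, div_mul_div_comm, Real.mul_self_sqrt zero_le_three]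
  norm_num

def pairCoords (pq : E × E) : (ℝ × ℝ) × (ℝ × ℝ) := ((pq.1 0, pq.2 0), (pq.1 1, pq.2 1))

lemma measurePreserving_pairCoords : MeasurePreserving pairCoords volume volume := by
  rw [Measure.volume_eq_prod]
  exact ((measurePreserving_finTwoArrow (volume : Measure (ℝ × ℝ))).comp
    (volume_measurePreserving_arrowProdEquivProdArrow ℝ ℝ (Fin 2)).symm).comp
    ((PiLp.volume_preserving_ofLp (Fin 2)).prod (PiLp.volume_preserving_ofLp (Fin 2)))

lemma pairSet_eq_image {d : ℝ} (hd : 0 ≤ d) :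
    {pq : E × E | pq.1 ∈ Rhombus ∧ pq.2 ∈ RhombusLD ∧ ‖pq.1 - pq.2‖ ≤ d} =
      (· + (0, va + vb)) '' (obliqueMap.prodMap obliqueMap '' (pairCoords ⁻¹' shiftedPairs d)) := by
  have hdiff : ∀ s t s' t' : ℝ, s • va + t • vb - (s' • va + t' • vb + va + vb) =
      -((1 - s + s') • va + (1 - t + t') • vb) := fun _ _ _ _ => by module
  ext ⟨p, q⟩
  simp only [mem_ofPred_eq, mem_image, Prod.exists, LinearMap.prodMap_apply, Prod.mk_add_mk,
    add_zero, Prod.mk.injEq]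
  constructor
  · rintro ⟨⟨s, t, hs, ht, rfl⟩, ⟨_, ⟨s', t', hs', ht', rfl⟩, rfl⟩, hn⟩
    simp only [hdiff, norm_neg, norm_smul_va_add_smul_vb_le_iff hd] at hn
    exact ⟨_, _, ⟨!₂[s, t], !₂[s', t'], ⟨⟨⟨hs, hs'⟩, ⟨ht, ht'⟩⟩, hn⟩, rfl, rfl⟩, rfl,
      (add_assoc _ _ _).symm⟩
  · rintro ⟨_, _, ⟨x, y, ⟨⟨⟨hs, hs'⟩, ⟨ht, ht'⟩⟩, hn⟩, rfl, rfl⟩, rfl, rfl⟩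
    refine ⟨⟨x 0, x 1, hs, ht, rfl⟩, ⟨obliqueMap y, ⟨y 0, y 1, hs', ht', rfl⟩, add_assoc _ _ _⟩, ?_⟩
    rw [obliqueMap_apply, obliqueMap_apply, ← add_assoc, hdiff, norm_neg,
      norm_smul_va_add_smul_vb_le_iff hd]
    exact hn

lemma volume_pairSet {d : ℝ} (hd : 0 ≤ d) :
    volume {pq : E × E | pq.1 ∈ Rhombus ∧ pq.2 ∈ RhombusLD ∧ ‖pq.1 - pq.2‖ ≤ d} =
      ENNReal.ofReal (3 / 4) * volume (shiftedPairs d) := by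
  have : (volume : Measure (E × E)).IsAddHaarMeasure := by
    rw [Measure.volume_eq_prod]
    infer_instance
  rw [pairSet_eq_image hd, image_add_right, measure_preimage_add_right,
    Measure.addHaar_image_linearMap, det_prodMap_obliqueMap, abs_of_pos (by norm_num),
    measurePreserving_pairCoords.measure_preimage (measurableSet_shiftedPairs d).nullMeasurableSet]

theorem rhombus_longdiag_cdf_piece1 :
    ∀ d : ℝ, 0 ≤ d → d ≤ 1 →
      V Rhombus RhombusLD d =
        (3/4) * ((1/6 - Real.pi/(18*Real.sqrt 3))*d^4) := by
  intro d hd hd1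
  have hint : 0 ≤ ∫ α in (0 : ℝ)..d, α * (chord d α ^ 2 / 2) :=
    intervalIntegral.integral_nonneg hd fun α hα => by have := hα.1; positivity
  rw [V, volume_pairSet hd, volume_shiftedPairs hd hd1, ← ENNReal.ofReal_mul (by norm_num),
    ENNReal.toReal_ofReal (by positivity), integral_mul_chord_sq hd]
end

section
/- For every real number d with 0 ≤ d ≤ √3/2, the measure V(R, R + (b − a), d) of the set of pairs of points (p, q) with p ∈ R, q ∈ R + (b − a) and ‖p − q‖ ≤ d equals (3/4)·[(1/6 + π/(9√3))·d⁴]. -/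
open MeasureTheory Real

noncomputable section

/-- The short-diagonal neighbor of the rhombus: R + (b - a). -/
def RhombusSD : Set (EuclideanSpace ℝ (Fin 2)) := (fun p => p + (vb - va)) '' Rhombus

end

/-!
Writing `p = z + q`, the measure is the integral over `‖z‖ ≤ d` of the area of
`RhombusSD ∩ (Rhombus - z)`. In the lattice coordinates `z = s a + t b` this overlap is the
parallelogram spanned by `s a` and `-t b`, of area `(√3/2) s⁺ (-t)⁺`, as long as
`|s|, |t| ≤ 1`, which `‖z‖ ≤ √3/2` guarantees. In polar coordinates `z = r (cos θ, sin θ)`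
the law of sines gives `s = (2r/√3) sin (π/3 - θ)` and `t = (2r/√3) sin θ`, so the integral
factors as `(2/√3) (∫₀^d r³ dr) (∫_{-2π/3}^0 sin (π/3 - θ) (-sin θ) dθ)`
`= (2/√3) (d⁴/4) (√3/4 + π/6)`.
-/

open Set
open scoped ENNReal

theorem measure_prod_setOf_sub_mem {G : Type*} [MeasurableSpace G] [AddGroup G]
    [MeasurableAdd₂ G] [MeasurableNeg G] (μ : Measure G) [SFinite μ] [μ.IsAddRightInvariant]
    {A B C : Set G} (hA : MeasurableSet A) (hB : MeasurableSet B) (hC : MeasurableSet C) :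
    μ.prod μ {pq | pq.1 ∈ A ∧ pq.2 ∈ B ∧ pq.1 - pq.2 ∈ C}
      = ∫⁻ z in C, μ {q | q ∈ B ∧ z + q ∈ A} ∂μ := by
  set T := {zq : G × G | zq.1 ∈ C ∧ zq.2 ∈ B ∧ zq.1 + zq.2 ∈ A}
  have hT : MeasurableSet T :=
    (measurable_fst hC).inter ((measurable_snd hB).inter ((measurable_fst.add measurable_snd) hA))
  have hpre : {pq : G × G | pq.1 ∈ A ∧ pq.2 ∈ B ∧ pq.1 - pq.2 ∈ C}
      = (fun pq : G × G => (pq.1 - pq.2, pq.2)) ⁻¹' T := by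
    ext pq
    simp only [T, mem_ofPred_eq, mem_preimage, sub_add_cancel]
    tauto
  rw [hpre, (measurePreserving_sub_prod μ μ).measure_preimage hT.nullMeasurableSet,
    Measure.prod_apply hT, ← lintegral_indicator hC]
  congr 1 with z
  by_cases hz : z ∈ C <;> simp [T, hz, Set.preimage]

def euclideanOfProd : ℝ × ℝ ≃ᵐ EuclideanSpace ℝ (Fin 2) :=
  MeasurableEquiv.finTwoArrow.symm.trans (MeasurableEquiv.toLp 2 (Fin 2 → ℝ))

theorem measurePreserving_euclideanOfProd : MeasurePreserving euclideanOfProd :=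
  (PiLp.volume_preserving_toLp (Fin 2)).comp (volume_preserving_finTwoArrow ℝ).symm

@[simp]
theorem euclideanOfProd_apply_zero (p : ℝ × ℝ) : euclideanOfProd p 0 = p.1 := rfl

@[simp]
theorem euclideanOfProd_apply_one (p : ℝ × ℝ) : euclideanOfProd p 1 = p.2 := rfl

theorem euclideanOfProd_sub (p q : ℝ × ℝ) :
    euclideanOfProd (p - q) = euclideanOfProd p - euclideanOfProd q := by
  ext i; fin_cases i <;> simp

theorem norm_euclideanOfProd (p : ℝ × ℝ) : ‖euclideanOfProd p‖ = √(p.1 ^ 2 + p.2 ^ 2) := by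
  simp [EuclideanSpace.norm_eq, Fin.sum_univ_two]

noncomputable def latticeMap : ℝ × ℝ →ₗ[ℝ] ℝ × ℝ where
  toFun w := (w.1 + w.2 / 2, √3 / 2 * w.2)
  map_add' w w' := by ext <;> simp <;> ring
  map_smul' c w := by ext <;> simp <;> ring

@[simp]
theorem latticeMap_apply (w : ℝ × ℝ) : latticeMap w = (w.1 + w.2 / 2, √3 / 2 * w.2) := rfl

theorem det_latticeMap : LinearMap.det latticeMap = √3 / 2 := by
  rw [← LinearMap.det_toMatrix (Module.Basis.finTwoProd ℝ), Matrix.det_fin_two]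
  simp [LinearMap.toMatrix_apply]

theorem euclideanOfProd_latticeMap (w : ℝ × ℝ) :
    euclideanOfProd (latticeMap w) = w.1 • va + w.2 • vb := by
  ext i; fin_cases i <;> simp [va, vb] <;> ring

theorem latticeMap_injective : Function.Injective latticeMap := by
  intro w w' h
  simp only [latticeMap_apply, Prod.mk.injEq] at h
  have h3 : √3 / 2 ≠ 0 := by positivity
  have h2 : w.2 = w'.2 := mul_left_cancel₀ h3 h.2
  ext <;> linarith [h.1]

theorem latticeMap_surjective : Function.Surjective latticeMap :=
  LinearMap.surjective_of_injective latticeMap_injective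

theorem euclideanOfProd_latticeMap_mem_rhombus_iff (w : ℝ × ℝ) :
    euclideanOfProd (latticeMap w) ∈ Rhombus ↔ w ∈ Icc 0 1 ×ˢ Icc 0 1 := by
  simp only [Rhombus, euclideanOfProd_latticeMap, mem_ofPred_eq, mem_prod]
  constructor
  · rintro ⟨s, t, hs, ht, h⟩
    rw [← euclideanOfProd_latticeMap, ← euclideanOfProd_latticeMap (s, t)] at h
    obtain rfl := latticeMap_injective (euclideanOfProd.injective h)
    exact ⟨hs, ht⟩
  · rintro ⟨hs, ht⟩
    exact ⟨w.1, w.2, hs, ht, rfl⟩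

theorem euclideanOfProd_latticeMap_mem_rhombusSD_iff (w : ℝ × ℝ) :
    euclideanOfProd (latticeMap w) ∈ RhombusSD ↔ w ∈ Icc (-1) 0 ×ˢ Icc 1 2 := by
  have hshift : euclideanOfProd (latticeMap w) + -(vb - va)
      = euclideanOfProd (latticeMap (w + (1, -1))) := by
    simp only [euclideanOfProd_latticeMap, Prod.fst_add, Prod.snd_add, add_smul, one_smul,
      neg_smul]
    abel
  rw [RhombusSD, image_add_right, mem_preimage, hshift,
    euclideanOfProd_latticeMap_mem_rhombus_iff]
  simp only [mem_prod, mem_Icc, Prod.fst_add, Prod.snd_add]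
  constructor <;> rintro ⟨⟨h1, h2⟩, h3, h4⟩ <;> refine ⟨⟨?_, ?_⟩, ?_, ?_⟩ <;> linarith

theorem preimage_euclideanOfProd_rhombus :
    euclideanOfProd ⁻¹' Rhombus = latticeMap '' (Icc 0 1 ×ˢ Icc 0 1) := by
  ext z
  obtain ⟨w, rfl⟩ := latticeMap_surjective z
  rw [mem_preimage, euclideanOfProd_latticeMap_mem_rhombus_iff,
    latticeMap_injective.mem_set_image]

theorem preimage_euclideanOfProd_rhombusSD :
    euclideanOfProd ⁻¹' RhombusSD = latticeMap '' (Icc (-1) 0 ×ˢ Icc 1 2) := by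
  ext z
  obtain ⟨w, rfl⟩ := latticeMap_surjective z
  rw [mem_preimage, euclideanOfProd_latticeMap_mem_rhombusSD_iff,
    latticeMap_injective.mem_set_image]

theorem volume_image_latticeMap (s : Set (ℝ × ℝ)) :
    volume (latticeMap '' s) = ENNReal.ofReal (√3 / 2) * volume s := by
  rw [Measure.addHaar_image_linearMap, det_latticeMap, abs_of_pos (by positivity)]

theorem setOf_mem_and_add_mem_Icc_prod_Icc {w : ℝ × ℝ} (h1 : |w.1| ≤ 1) (h2 : |w.2| ≤ 1) :
    {v : ℝ × ℝ | v ∈ Icc (-1) 0 ×ˢ Icc 1 2 ∧ w + v ∈ Icc 0 1 ×ˢ Icc 0 1}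
      = Icc (-w.1) 0 ×ˢ Icc 1 (1 - w.2) := by
  rw [abs_le] at h1 h2
  ext v
  simp only [mem_ofPred_eq, mem_prod, mem_Icc, Prod.fst_add, Prod.snd_add]
  constructor
  · rintro ⟨⟨⟨-, h3⟩, h4, -⟩, ⟨h5, -⟩, -, h6⟩
    exact ⟨⟨by linarith, h3⟩, h4, by linarith⟩
  · rintro ⟨⟨h3, h4⟩, h5, h6⟩
    exact ⟨⟨⟨by linarith, h4⟩, h5, by linarith⟩, ⟨by linarith, by linarith⟩,
      by linarith, by linarith⟩

noncomputable def rhombusOverlap (z : ℝ × ℝ) : ℝ≥0∞ :=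
  volume {q | euclideanOfProd q ∈ RhombusSD ∧ euclideanOfProd (z + q) ∈ Rhombus}

theorem rhombusOverlap_latticeMap {w : ℝ × ℝ} (h1 : |w.1| ≤ 1) (h2 : |w.2| ≤ 1) :
    rhombusOverlap (latticeMap w)
      = ENNReal.ofReal (√3 / 2) * (ENNReal.ofReal w.1 * ENNReal.ofReal (-w.2)) := by
  have hset : {q | euclideanOfProd q ∈ RhombusSD ∧ euclideanOfProd (latticeMap w + q) ∈ Rhombus}
      = latticeMap '' {v | v ∈ Icc (-1) 0 ×ˢ Icc 1 2 ∧ w + v ∈ Icc 0 1 ×ˢ Icc 0 1} := by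
    ext q
    obtain ⟨v, rfl⟩ := latticeMap_surjective q
    rw [latticeMap_injective.mem_set_image, mem_ofPred_eq, mem_ofPred_eq, ← map_add,
      euclideanOfProd_latticeMap_mem_rhombusSD_iff, euclideanOfProd_latticeMap_mem_rhombus_iff]
  rw [rhombusOverlap, hset, volume_image_latticeMap, setOf_mem_and_add_mem_Icc_prod_Icc h1 h2,
    Measure.volume_eq_prod, Measure.prod_prod, Real.volume_Icc, Real.volume_Icc]
  ring_nf

theorem V_rhombus_rhombusSD_eq_lintegral_rhombusOverlap (d : ℝ) :
    V Rhombus RhombusSD d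
      = (∫⁻ z in euclideanOfProd ⁻¹' Metric.closedBall 0 d, rhombusOverlap z).toReal := by
  have hbox {a b c e : ℝ} : MeasurableSet (latticeMap '' (Icc a b ×ˢ Icc c e)) :=
    ((isCompact_Icc.prod isCompact_Icc).image
      latticeMap.continuous_of_finiteDimensional).isClosed.measurableSet
  have hR : MeasurableSet (euclideanOfProd ⁻¹' Rhombus) :=
    preimage_euclideanOfProd_rhombus ▸ hbox
  have hSD : MeasurableSet (euclideanOfProd ⁻¹' RhombusSD) :=
    preimage_euclideanOfProd_rhombusSD ▸ hbox
  have hset : euclideanOfProd.prodCongr euclideanOfProd ⁻¹'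
      {pq | pq.1 ∈ Rhombus ∧ pq.2 ∈ RhombusSD ∧ ‖pq.1 - pq.2‖ ≤ d}
      = {pq | pq.1 ∈ euclideanOfProd ⁻¹' Rhombus ∧ pq.2 ∈ euclideanOfProd ⁻¹' RhombusSD ∧
          pq.1 - pq.2 ∈ euclideanOfProd ⁻¹' Metric.closedBall 0 d} := by
    ext pq
    simp [MeasurableEquiv.prodCongr, euclideanOfProd_sub]
  rw [V, Measure.volume_eq_prod, ← MeasurePreserving.measure_preimage_equiv
      (f := euclideanOfProd.prodCongr euclideanOfProd)
      (measurePreserving_euclideanOfProd.prod measurePreserving_euclideanOfProd), hset,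
    measure_prod_setOf_sub_mem volume hR hSD
      (measurableSet_closedBall.preimage euclideanOfProd.measurable)]
  rfl

theorem polarCoord_symm_eq_latticeMap (p : ℝ × ℝ) :
    polarCoord.symm p
      = latticeMap (2 * p.1 / √3 * sin (π / 3 - p.2), 2 * p.1 / √3 * sin p.2) := by
  have h3 : √3 ≠ 0 := by positivity
  ext <;> simp only [polarCoord_symm_apply, latticeMap_apply, sin_sub, sin_pi_div_three,
    cos_pi_div_three] <;> field_simp; ring

theorem norm_euclideanOfProd_polarCoord_symm (p : ℝ × ℝ) :
    ‖euclideanOfProd (polarCoord.symm p)‖ = |p.1| := by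
  rw [norm_euclideanOfProd, polarCoord_symm_apply, mul_pow, mul_pow, ← mul_add,
    cos_sq_add_sin_sq, mul_one, sqrt_sq_eq_abs]

theorem integral_sin_pi_div_three_sub_mul_neg_sin :
    ∫ θ in -(2 * π / 3)..0, sin (π / 3 - θ) * -sin θ = √3 / 4 + π / 6 := by
  have hderiv (θ : ℝ) : HasDerivAt (fun θ => (θ - sin θ * cos θ) / 4 - √3 / 4 * sin θ ^ 2)
      (sin (π / 3 - θ) * -sin θ) θ := by
    have h := (((hasDerivAt_id θ).sub ((hasDerivAt_sin θ).mul (hasDerivAt_cos θ))).div_const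
      4).sub (((hasDerivAt_sin θ).pow 2).const_mul (√3 / 4))
    refine h.congr_deriv ?_
    rw [sin_sub, sin_pi_div_three, cos_pi_div_three]
    simp only [Nat.cast_ofNat]
    linear_combination (-1 / 4 : ℝ) * sin_sq_add_cos_sq θ
  have hsin : sin (-(2 * π / 3)) = -(√3 / 2) := by
    rw [sin_neg, show 2 * π / 3 = π - π / 3 by ring, sin_pi_sub, sin_pi_div_three]
  have hcos : cos (-(2 * π / 3)) = -(1 / 2) := by
    rw [cos_neg, show 2 * π / 3 = π - π / 3 by ring, cos_pi_sub, cos_pi_div_three]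
  rw [intervalIntegral.integral_eq_sub_of_hasDerivAt (fun θ _ => hderiv θ)
    ((by fun_prop : Continuous fun θ => sin (π / 3 - θ) * -sin θ).intervalIntegrable _ _),
    hsin, hcos]
  simp only [sin_zero, cos_zero]
  linear_combination √3 / 16 * Real.sq_sqrt (show (0:ℝ) ≤ 3 by norm_num)

theorem ofReal_sin_pi_div_three_sub_mul_ofReal_neg_sin_eq_indicator {θ : ℝ}
    (hθ : θ ∈ Ioo (-π) π) :
    ENNReal.ofReal (sin (π / 3 - θ)) * ENNReal.ofReal (-sin θ)
      = (Icc (-(2 * π / 3)) 0).indicator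
          (fun θ => ENNReal.ofReal (sin (π / 3 - θ) * -sin θ)) θ := by
  obtain ⟨hθ₁, hθ₂⟩ := hθ
  by_cases hlow : θ < -(2 * π / 3)
  · have hneg : sin (π / 3 - θ) < 0 := by
      rw [← sin_sub_two_pi]
      exact sin_neg_of_neg_of_neg_pi_lt (by linarith) (by linarith)
    rw [ENNReal.ofReal_of_nonpos hneg.le, zero_mul,
      indicator_of_notMem (fun h => hlow.not_ge h.1)]
  by_cases hhigh : 0 < θ
  · rw [ENNReal.ofReal_of_nonpos (neg_nonpos.2 (sin_pos_of_pos_of_lt_pi hhigh hθ₂).le),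
      mul_zero, indicator_of_notMem (fun h => hhigh.not_ge h.2)]
  · rw [indicator_of_mem (show θ ∈ Icc _ _ from ⟨not_lt.1 hlow, not_lt.1 hhigh⟩),
      ENNReal.ofReal_mul (sin_nonneg_of_nonneg_of_le_pi (by linarith [pi_pos]) (by linarith))]

theorem lintegral_ofReal_sin_pi_div_three_sub_mul_ofReal_neg_sin :
    ∫⁻ θ in Ioo (-π) π, ENNReal.ofReal (sin (π / 3 - θ)) * ENNReal.ofReal (-sin θ)
      = ENNReal.ofReal (√3 / 4 + π / 6) := by
  have hsub : Icc (-(2 * π / 3)) 0 ⊆ Ioo (-π) π :=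
    Icc_subset_Ioo (by linarith [pi_pos]) pi_pos
  rw [setLIntegral_congr_fun measurableSet_Ioo
      (fun θ hθ => ofReal_sin_pi_div_three_sub_mul_ofReal_neg_sin_eq_indicator hθ),
    lintegral_indicator measurableSet_Icc, Measure.restrict_restrict measurableSet_Icc,
    inter_eq_left.2 hsub, ← integral_sin_pi_div_three_sub_mul_neg_sin,
    intervalIntegral.integral_of_le (by linarith [pi_pos]), ← integral_Icc_eq_integral_Ioc,
    ofReal_integral_eq_lintegral_ofReal]
  · exact (by fun_prop : Continuous fun θ => sin (π / 3 - θ) * -sin θ).integrableOn_Icc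
  · refine (ae_restrict_iff' measurableSet_Icc).2 (Filter.Eventually.of_forall fun θ hθ => ?_)
    exact mul_nonneg (sin_nonneg_of_nonneg_of_le_pi (by linarith [hθ.2, pi_pos])
      (by linarith [hθ.1])) (neg_nonneg.2 (sin_nonpos_of_nonpos_of_neg_pi_le hθ.2
        (by linarith [hθ.1, pi_pos])))

theorem lintegral_Ioi_indicator_Iic_ofReal_pow_three {d : ℝ} (hd : 0 ≤ d) :
    ∫⁻ r in Ioi 0, (Iic d).indicator (fun r => ENNReal.ofReal (r ^ 3)) r
      = ENNReal.ofReal (d ^ 4 / 4) := by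
  rw [lintegral_indicator measurableSet_Iic, Measure.restrict_restrict measurableSet_Iic,
    Iic_inter_Ioi, ← ofReal_integral_eq_lintegral_ofReal, ← intervalIntegral.integral_of_le hd,
    integral_pow]
  · norm_num
  · exact (continuous_pow 3).integrableOn_Ioc
  · exact (ae_restrict_iff' measurableSet_Ioc).2
      (Filter.Eventually.of_forall fun r hr => pow_nonneg hr.1.le 3)

theorem ofReal_smul_indicator_rhombusOverlap_polarCoord_symm {d : ℝ} (hd : d ≤ √3 / 2)
    {p : ℝ × ℝ} (hp : p ∈ polarCoord.target) :
    ENNReal.ofReal p.1 • (euclideanOfProd ⁻¹' Metric.closedBall 0 d).indicator rhombusOverlap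
        (polarCoord.symm p)
      = ENNReal.ofReal (2 / √3) * ((Iic d).indicator (fun r => ENNReal.ofReal (r ^ 3)) p.1 *
          (ENNReal.ofReal (sin (π / 3 - p.2)) * ENNReal.ofReal (-sin p.2))) := by
  obtain ⟨r, θ⟩ := p
  have hr : 0 < r := hp.1
  have hball : polarCoord.symm (r, θ) ∈ euclideanOfProd ⁻¹' Metric.closedBall 0 d ↔ r ≤ d := by
    rw [mem_preimage, mem_closedBall_zero_iff, norm_euclideanOfProd_polarCoord_symm,
      abs_of_pos hr]
  by_cases hrd : r ≤ d
  · have hc : 0 ≤ 2 * r / √3 := by positivity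
    have hc1 : 2 * r / √3 ≤ 1 := by
      rw [div_le_one (by positivity)]
      nlinarith [sq_sqrt (show (0:ℝ) ≤ 3 by norm_num), sqrt_nonneg 3]
    have hbound (x : ℝ) : |2 * r / √3 * sin x| ≤ 1 := by
      rw [abs_mul, abs_of_nonneg hc]
      exact (mul_le_of_le_one_right hc (abs_sin_le_one x)).trans hc1
    have hconst : ENNReal.ofReal r * ENNReal.ofReal (√3 / 2) * ENNReal.ofReal (2 * r / √3)
        * ENNReal.ofReal (2 * r / √3) = ENNReal.ofReal (2 / √3) * ENNReal.ofReal (r ^ 3) := by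
      rw [← ENNReal.ofReal_mul hr.le, ← ENNReal.ofReal_mul (by positivity),
        ← ENNReal.ofReal_mul (by positivity), ← ENNReal.ofReal_mul (by positivity)]
      congr 1
      field_simp
    rw [indicator_of_mem (hball.2 hrd), indicator_of_mem (show r ∈ Iic d from hrd),
      polarCoord_symm_eq_latticeMap, rhombusOverlap_latticeMap (hbound _) (hbound _),
      ← mul_neg, ENNReal.ofReal_mul hc, ENNReal.ofReal_mul hc, smul_eq_mul,
      ← mul_assoc (ENNReal.ofReal (2 / √3)), ← hconst]
    ring
  · rw [indicator_of_notMem (mt hball.1 hrd), indicator_of_notMem (show r ∉ Iic d from hrd)]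
    simp

theorem setLIntegral_closedBall_rhombusOverlap {d : ℝ} (hd₀ : 0 ≤ d) (hd : d ≤ √3 / 2) :
    ∫⁻ z in euclideanOfProd ⁻¹' Metric.closedBall 0 d, rhombusOverlap z
      = ENNReal.ofReal (2 / √3) *
          (ENNReal.ofReal (d ^ 4 / 4) * ENNReal.ofReal (√3 / 4 + π / 6)) := by
  rw [← lintegral_indicator (measurableSet_closedBall.preimage euclideanOfProd.measurable),
    ← lintegral_comp_polarCoord_symm,
    setLIntegral_congr_fun polarCoord.open_target.measurableSet fun _ hp =>
      ofReal_smul_indicator_rhombusOverlap_polarCoord_symm hd hp,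
    lintegral_const_mul' _ _ ENNReal.ofReal_ne_top, polarCoord_target, Measure.volume_eq_prod,
    ← Measure.prod_restrict,
    lintegral_prod_mul (f := (Iic d).indicator fun r => ENNReal.ofReal (r ^ 3))
      (g := fun θ => ENNReal.ofReal (sin (π / 3 - θ)) * ENNReal.ofReal (-sin θ))
      ((by fun_prop : Measurable fun r : ℝ => ENNReal.ofReal (r ^ 3)).indicator
        measurableSet_Iic).aemeasurable (by fun_prop),
    lintegral_Ioi_indicator_Iic_ofReal_pow_three hd₀,
    lintegral_ofReal_sin_pi_div_three_sub_mul_ofReal_neg_sin]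

theorem rhombus_shortdiag_cdf_piece1 :
    ∀ d : ℝ, 0 ≤ d → d ≤ Real.sqrt 3 / 2 →
      V Rhombus RhombusSD d =
        (3/4) * ((1/6 + Real.pi/(9*Real.sqrt 3))*d^4) := by
  intro d hd₀ hd
  rw [V_rhombus_rhombusSD_eq_lintegral_rhombusOverlap,
    setLIntegral_closedBall_rhombusOverlap hd₀ hd,
    ← ENNReal.ofReal_mul (by positivity), ← ENNReal.ofReal_mul (by positivity),
    ENNReal.toReal_ofReal (by positivity)]
  field_simp
  ring
end

section
/- The second moment of the distance between two independent uniformly distributed points in the unit rhombus equals 1/3; that is, the integral of ‖p − q‖² over (p, q) ∈ R × R with respect to the product Lebesgue measure equals (3/4)·(1/3) = 1/4. -/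
open MeasureTheory Real

/-!
The linear map `x ↦ x₀ • a + x₁ • b` carries the unit square onto the rhombus with Jacobian
`√3 / 2`, and since `⟪a, b⟫ = 1 / 2` it pulls `‖p‖²` back to `x₀² + x₀ x₁ + x₁²`. The integral
is therefore `3 / 4` times the integral of `(u₀ - v₀)² + (u₀ - v₀)(u₁ - v₁) + (u₁ - v₁)²` over
pairs `(u, v)` of points of the unit square, which Fubini reduces to one-variable polynomial
integrals: `1 / 6 + 0 + 1 / 6 = 1 / 3`.
-/

open Set

local notation "ℝ²" => EuclideanSpace ℝ (Fin 2)

lemma integral_Icc_quadratic (A B C : ℝ) :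
    ∫ x in Icc (0 : ℝ) 1, (A * x ^ 2 + B * x + C) = A / 3 + B / 2 + C := by
  have antideriv (x : ℝ) :
      HasDerivAt (fun x => A * x ^ 3 / 3 + B * x ^ 2 / 2 + C * x) (A * x ^ 2 + B * x + C) x :=
    ((((hasDerivAt_pow 3 x).const_mul A).div_const 3).add
      (((hasDerivAt_pow 2 x).const_mul B).div_const 2) |>.add
        ((hasDerivAt_id' x).const_mul C)).congr_deriv (by push_cast; ring)
  rw [integral_Icc_eq_integral_Ioc, ← intervalIntegral.integral_of_le zero_le_one,
    intervalIntegral.integral_eq_sub_of_hasDerivAt (fun x _ => antideriv x)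
      (Continuous.intervalIntegrable (by fun_prop) _ _)]
  ring

def unitSquare : Set ℝ² := {x | x 0 ∈ Icc 0 1 ∧ x 1 ∈ Icc 0 1}

lemma isCompact_unitSquare : IsCompact unitSquare :=
  ((PiLp.homeomorph 2 fun _ : Fin 2 => ℝ).trans Homeomorph.finTwoArrow).isCompact_preimage.2
    (isCompact_Icc.prod isCompact_Icc)

lemma setIntegral_unitSquare (f : ℝ → ℝ → ℝ) (hf : Continuous (Function.uncurry f)) :
    ∫ x in unitSquare, f (x 0) (x 1) = ∫ s in Icc (0 : ℝ) 1, ∫ t in Icc (0 : ℝ) 1, f s t := by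
  let e : ℝ² ≃ᵐ ℝ × ℝ :=
    (MeasurableEquiv.toLp 2 (Fin 2 → ℝ)).symm.trans MeasurableEquiv.finTwoArrow
  have he : MeasurePreserving e :=
    (PiLp.volume_preserving_ofLp _).trans (volume_preserving_finTwoArrow ℝ)
  calc ∫ x in unitSquare, f (x 0) (x 1)
      = ∫ p in Icc 0 1 ×ˢ Icc 0 1, Function.uncurry f p :=
        he.setIntegral_preimage_emb e.measurableEmbedding (Function.uncurry f)
          (Icc 0 1 ×ˢ Icc 0 1)
    _ = ∫ s in Icc (0 : ℝ) 1, ∫ t in Icc (0 : ℝ) 1, f s t := by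
        rw [Measure.volume_eq_prod, setIntegral_prod _
          (hf.continuousOn.integrableOn_compact (isCompact_Icc.prod isCompact_Icc))]
        rfl

noncomputable def rhombusMap : ℝ² →L[ℝ] ℝ² :=
  (EuclideanSpace.proj 0).smulRight va + (EuclideanSpace.proj 1).smulRight vb

lemma rhombusMap_apply (x : ℝ²) : rhombusMap x = x 0 • va + x 1 • vb := rfl

lemma rhombus_eq_image : Rhombus = rhombusMap '' unitSquare := by
  ext p
  constructor
  · rintro ⟨s, t, hs, ht, rfl⟩
    exact ⟨!₂[s, t], ⟨hs, ht⟩, by simp [rhombusMap_apply]⟩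
  · rintro ⟨x, ⟨h0, h1⟩, rfl⟩
    exact ⟨x 0, x 1, h0, h1, rfl⟩

lemma det_rhombusMap : (rhombusMap : ℝ² →L[ℝ] ℝ²).det = √3 / 2 := by
  let b := PiLp.basisFun 2 ℝ (Fin 2)
  rw [ContinuousLinearMap.det, ← LinearMap.det_toMatrix b]
  have : LinearMap.toMatrix b b rhombusMap = !![1, 1 / 2; 0, √3 / 2] := by
    ext i j
    fin_cases i <;> fin_cases j <;> simp [b, LinearMap.toMatrix_apply, rhombusMap_apply, va, vb]
  rw [this, Matrix.det_fin_two_of]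
  ring

lemma norm_rhombusMap_sq (x : ℝ²) : ‖rhombusMap x‖ ^ 2 = x 0 ^ 2 + x 0 * x 1 + x 1 ^ 2 := by
  rw [EuclideanSpace.norm_sq_eq, Fin.sum_univ_two]
  norm_num [rhombusMap_apply, va, vb, mul_pow, div_pow]
  ring

lemma injective_rhombusMap : Function.Injective rhombusMap := by
  have hdet : IsUnit (LinearMap.det (rhombusMap : ℝ² →ₗ[ℝ] ℝ²)) := by
    rw [← ContinuousLinearMap.det, det_rhombusMap]
    exact isUnit_iff_ne_zero.2 (by positivity)
  exact ((Module.End.isUnit_iff _).1 ((LinearMap.isUnit_iff_isUnit_det _).2 hdet)).injective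

lemma isCompact_rhombus : IsCompact Rhombus :=
  rhombus_eq_image ▸ isCompact_unitSquare.image rhombusMap.continuous

lemma setIntegral_rhombus {F : Type*} [NormedAddCommGroup F] [NormedSpace ℝ F] (g : ℝ² → F) :
    ∫ p in Rhombus, g p = (√3 / 2) • ∫ x in unitSquare, g (rhombusMap x) := by
  rw [rhombus_eq_image, integral_image_eq_integral_abs_det_fderiv_smul volume
    isCompact_unitSquare.isClosed.measurableSet
    (fun x _ => rhombusMap.hasFDerivAt.hasFDerivWithinAt) injective_rhombusMap.injOn,
    det_rhombusMap, abs_of_pos (by positivity), integral_smul]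

lemma setIntegral_rhombus_prod (F : ℝ² × ℝ² → ℝ) (hF : Continuous F) :
    ∫ pq in Rhombus ×ˢ Rhombus, F pq ∂(volume.prod volume)
      = 3 / 4 * ∫ u in unitSquare, ∫ v in unitSquare, F (rhombusMap u, rhombusMap v) := by
  rw [setIntegral_prod _ (hF.continuousOn.integrableOn_compact
    (isCompact_rhombus.prod isCompact_rhombus))]
  simp_rw [setIntegral_rhombus, smul_eq_mul, integral_const_mul]
  rw [← mul_assoc, div_mul_div_comm, Real.mul_self_sqrt zero_le_three]
  norm_num

lemma setIntegral_unitSquare_quadratic_sub (a b : ℝ) :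
    ∫ v in unitSquare, ((a - v 0) ^ 2 + (a - v 0) * (b - v 1) + (b - v 1) ^ 2)
      = (a ^ 2 - a + 1 / 3) + (a - 1 / 2) * (b - 1 / 2) + (b ^ 2 - b + 1 / 3) := by
  rw [setIntegral_unitSquare (fun s t => (a - s) ^ 2 + (a - s) * (b - t) + (b - t) ^ 2)
    (by fun_prop)]
  have expand_t (s t : ℝ) : (a - s) ^ 2 + (a - s) * (b - t) + (b - t) ^ 2
      = 1 * t ^ 2 + (-(a - s) - 2 * b) * t + ((a - s) ^ 2 + (a - s) * b + b ^ 2) := by ring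
  have expand_s (s : ℝ) : 1 / 3 + (-(a - s) - 2 * b) / 2 + ((a - s) ^ 2 + (a - s) * b + b ^ 2)
      = 1 * s ^ 2 + (-2 * a - (b - 1 / 2)) * s
          + (a ^ 2 + a * (b - 1 / 2) + (b ^ 2 - b + 1 / 3)) := by
    ring
  simp_rw [expand_t, integral_Icc_quadratic, expand_s, integral_Icc_quadratic]
  ring

lemma setIntegral_unitSquare_quadratic :
    ∫ u in unitSquare,
        ((u 0 ^ 2 - u 0 + 1 / 3) + (u 0 - 1 / 2) * (u 1 - 1 / 2) + (u 1 ^ 2 - u 1 + 1 / 3))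
      = 1 / 3 := by
  rw [setIntegral_unitSquare
    (fun s t => (s ^ 2 - s + 1 / 3) + (s - 1 / 2) * (t - 1 / 2) + (t ^ 2 - t + 1 / 3))
    (by fun_prop)]
  have expand_t (s t : ℝ) :
      (s ^ 2 - s + 1 / 3) + (s - 1 / 2) * (t - 1 / 2) + (t ^ 2 - t + 1 / 3)
        = 1 * t ^ 2 + (s - 3 / 2) * t + (s ^ 2 - s + 1 / 3 - (s - 1 / 2) / 2 + 1 / 3) := by
    ring
  have expand_s (s : ℝ) : 1 / 3 + (s - 3 / 2) / 2 + (s ^ 2 - s + 1 / 3 - (s - 1 / 2) / 2 + 1 / 3)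
      = 1 * s ^ 2 + (-1) * s + 1 / 2 := by ring
  simp_rw [expand_t, integral_Icc_quadratic, expand_s, integral_Icc_quadratic]
  norm_num

theorem rhombus_second_moment :
    ∫ pq in Rhombus ×ˢ Rhombus,
        ‖pq.1 - pq.2‖^2 ∂(volume : Measure (EuclideanSpace ℝ (Fin 2) × EuclideanSpace ℝ (Fin 2))) =
      (3/4) * (1/3) := by
  rw [Measure.volume_eq_prod,
    setIntegral_rhombus_prod (fun pq => ‖pq.1 - pq.2‖ ^ 2) (by fun_prop)]
  simp_rw [← map_sub, norm_rhombusMap_sq, PiLp.sub_apply, setIntegral_unitSquare_quadratic_sub,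
    setIntegral_unitSquare_quadratic]
end
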